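/- For unit vectors v, w in ℝ^r and Y_r the r×r symmetric matrix with independent standard Gaussian entries {(Y_r)_ij : i ≥ j}, one has E|⟨v, Y_r v⟩ − ⟨w, Y_r w⟩|² ≤ 4‖v − w‖². -/

import Mathlib

/-!
Write `a i j = v i v j - w i w j`. The difference of the two quadratic forms is
`∑ i j, a i j Y i j`; grouping the symmetric pair `(i, j), (j, i)` turns it into a linear
combination `∑ c q X q` of the independent standard Gaussians `X q` indexed by the lower
triangle, with `c q = a q` on the diagonal and `2 a q` off it. Its second moment is therefore
`∑ c q ^ 2 ≤ 2 ∑ i j, a i j ^ 2 = 2 (2 - 2 ⟪v, w⟫²)`, and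
`1 - ⟪v, w⟫² ≤ 2 (1 - ⟪v, w⟫) = ‖v - w‖²`.
-/

open MeasureTheory ProbabilityTheory Real

section Moments

variable {Ω : Type*} [MeasurableSpace Ω] {μ : Measure Ω}

lemma ProbabilityTheory.HasLaw.memLp_gaussianReal {X : Ω → ℝ} {m : ℝ} {v : NNReal}
    (hX : HasLaw X (gaussianReal m v) μ) (p : NNReal) : MemLp X p μ := by
  have h := memLp_id_gaussianReal (μ := m) (v := v) p
  rw [← hX.map_eq] at h
  exact (memLp_map_measure_iff aestronglyMeasurable_id hX.aemeasurable).mp h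

variable [IsProbabilityMeasure μ]

lemma integral_sq_sum_mul_of_iIndepFun {ι : Type*} [Fintype ι] {X : ι → Ω → ℝ}
    (hindep : iIndepFun X μ) (hL2 : ∀ i, MemLp (X i) 2 μ) (hmean : ∀ i, μ[X i] = 0)
    (c : ι → ℝ) :
    ∫ ω, (∑ i, c i * X i ω) ^ 2 ∂μ = ∑ i, c i ^ 2 * Var[X i; μ] := by
  have hcL2 : ∀ i, MemLp (fun ω ↦ c i * X i ω) 2 μ := fun i ↦ (hL2 i).const_mul (c i)
  have hmean_sum : μ[fun ω ↦ ∑ i, c i * X i ω] = 0 := by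
    rw [integral_finsetSum _ fun i _ ↦ (hcL2 i).integrable one_le_two]
    simp [integral_const_mul, hmean]
  have hsum : (fun ω ↦ ∑ i, c i * X i ω) = ∑ i, fun ω ↦ c i * X i ω := by
    ext ω
    simp
  rw [← variance_of_integral_eq_zero (hsum ▸ memLp_finsetSum' _ fun i _ ↦ hcL2 i).aemeasurable
    hmean_sum, hsum, IndepFun.variance_sum (fun i _ ↦ hcL2 i)]
  · simp only [variance_const_mul]
  · exact fun i _ j _ hij ↦
      (hindep.indepFun hij).comp (measurable_const_mul (c i)) (measurable_const_mul (c j))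

lemma integral_sq_sum_mul_of_iIndepFun_gaussianReal {ι : Type*} [Fintype ι] {X : ι → Ω → ℝ}
    (hindep : iIndepFun X μ) (hX : ∀ i, HasLaw (X i) (gaussianReal 0 1) μ) (c : ι → ℝ) :
    ∫ ω, (∑ i, c i * X i ω) ^ 2 ∂μ = ∑ i, c i ^ 2 := by
  rw [integral_sq_sum_mul_of_iIndepFun hindep (fun i ↦ (hX i).memLp_gaussianReal 2)
    fun i ↦ by simp [(hX i).integral_eq]]
  simp [(hX _).variance_eq]

end Moments

lemma sum_sum_eq_sum_lowerTriangle {ι : Type*} [Fintype ι] [LinearOrder ι] (f : ι → ι → ℝ)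
    (hf : ∀ i j, f i j = f j i) :
    ∑ i, ∑ j, f i j =
      ∑ q : {q : ι × ι // q.2 ≤ q.1}, (if q.1.1 = q.1.2 then 1 else 2) * f q.1.1 q.1.2 := by
  classical
  have hupper : ∑ q ∈ Finset.univ.filter (fun q : ι × ι ↦ ¬ q.2 ≤ q.1), f q.1 q.2
      = ∑ q ∈ Finset.univ.filter (fun q : ι × ι ↦ q.2 < q.1), f q.1 q.2 :=
    Finset.sum_nbij' Prod.swap Prod.swap (by simp) (by simp) (by simp) (by simp)
      fun q _ ↦ hf q.1 q.2
  have hweight : ∀ q ∈ Finset.univ.filter (fun q : ι × ι ↦ q.2 ≤ q.1),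
      (if q.1 = q.2 then 1 else 2) * f q.1 q.2 =
        f q.1 q.2 + if q.2 < q.1 then f q.1 q.2 else 0 := by
    intro q hq
    rcases (Finset.mem_filter.mp hq).2.lt_or_eq with h | h
    · simp [h, h.ne', two_mul]
    · simp [h]
  rw [← Finset.sum_subtype (Finset.univ.filter fun q : ι × ι ↦ q.2 ≤ q.1) (by simp)
      fun q : ι × ι ↦ (if q.1 = q.2 then 1 else 2) * f q.1 q.2,
    ← Fintype.sum_prod_type', ← Finset.sum_filter_add_sum_filter_not _ fun q : ι × ι ↦ q.2 ≤ q.1,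
    hupper, Finset.sum_congr rfl hweight, Finset.sum_add_distrib, ← Finset.sum_filter,
    Finset.filter_filter]
  congr 2
  ext q
  simp only [Finset.mem_filter, Finset.mem_univ, true_and]
  exact (and_iff_right_of_imp le_of_lt).symm

lemma sum_sum_sq_mul_sub_mul {ι : Type*} [Fintype ι] (v w : ι → ℝ) :
    ∑ i, ∑ j, (v i * v j - w i * w j) ^ 2 =
      (∑ i, v i ^ 2) ^ 2 + (∑ i, w i ^ 2) ^ 2 - 2 * (∑ i, v i * w i) ^ 2 := by
  rw [sq (∑ i, v i ^ 2), sq (∑ i, w i ^ 2), sq (∑ i, v i * w i), Finset.sum_mul_sum,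
    Finset.sum_mul_sum, Finset.sum_mul_sum, Finset.mul_sum]
  simp only [Finset.mul_sum, ← Finset.sum_add_distrib, ← Finset.sum_sub_distrib]
  congr! 2 with i _ j _
  ring

lemma sum_sum_sq_mul_sub_mul_le {ι : Type*} [Fintype ι] {v w : ι → ℝ}
    (hv : ∑ i, v i ^ 2 = 1) (hw : ∑ i, w i ^ 2 = 1) :
    ∑ i, ∑ j, (v i * v j - w i * w j) ^ 2 ≤ 2 * ∑ i, (v i - w i) ^ 2 := by
  have hdist : ∑ i, (v i - w i) ^ 2 = 2 - 2 * ∑ i, v i * w i := by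
    simp only [sub_sq, Finset.sum_add_distrib, Finset.sum_sub_distrib, mul_assoc,
      ← Finset.mul_sum, hv, hw]
    ring
  rw [sum_sum_sq_mul_sub_mul, hv, hw, hdist]
  nlinarith [sq_nonneg (∑ i, v i * w i - 1)]

theorem stmt_4
    {Ω : Type*} [MeasurableSpace Ω] (μ : Measure Ω) [IsProbabilityMeasure μ]
    (r : ℕ) (Y : Fin r → Fin r → Ω → ℝ)
    (hY_symm : ∀ i j, Y i j = Y j i)
    (hY_meas : ∀ i j, Measurable (Y i j))
    (hY_gauss : ∀ i j, Measure.map (Y i j) μ = gaussianReal 0 1)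
    (hY_indep : iIndepFun
      (fun q : {q : Fin r × Fin r // q.2 ≤ q.1} => Y q.1.1 q.1.2) μ)
    (v w : Fin r → ℝ) (hv : ∑ i, (v i) ^ 2 = 1) (hw : ∑ i, (w i) ^ 2 = 1) :
    ∫ ω, |(∑ i, ∑ j, v i * Y i j ω * v j) - (∑ i, ∑ j, w i * Y i j ω * w j)| ^ 2 ∂μ ≤
      4 * ∑ i, (v i - w i) ^ 2 := by
  set a : Fin r → Fin r → ℝ := fun i j ↦ v i * v j - w i * w j
  set c : {q : Fin r × Fin r // q.2 ≤ q.1} → ℝ :=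
    fun q ↦ (if q.1.1 = q.1.2 then 1 else 2) * a q.1.1 q.1.2
  have hdiff : ∀ ω, (∑ i, ∑ j, v i * Y i j ω * v j) - (∑ i, ∑ j, w i * Y i j ω * w j) =
      ∑ q, c q * Y q.1.1 q.1.2 ω := by
    intro ω
    simp only [← Finset.sum_sub_distrib]
    rw [sum_sum_eq_sum_lowerTriangle _ fun i j ↦ by rw [hY_symm i j]; ring]
    simp only [c, a, mul_assoc]
    congr! 2
    ring
  calc ∫ ω, |(∑ i, ∑ j, v i * Y i j ω * v j) - (∑ i, ∑ j, w i * Y i j ω * w j)| ^ 2 ∂μ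
      = ∑ q, c q ^ 2 := by
        simp_rw [sq_abs, hdiff]
        exact integral_sq_sum_mul_of_iIndepFun_gaussianReal hY_indep
          (fun q ↦ ⟨(hY_meas _ _).aemeasurable, hY_gauss _ _⟩) c
    _ ≤ ∑ q : {q : Fin r × Fin r // q.2 ≤ q.1},
          2 * ((if q.1.1 = q.1.2 then 1 else 2) * a q.1.1 q.1.2 ^ 2) :=
        Finset.sum_le_sum fun q _ ↦ by
          simp only [c]
          split_ifs <;> nlinarith [sq_nonneg (a q.1.1 q.1.2)]
    _ = 2 * ∑ i, ∑ j, a i j ^ 2 := by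
        rw [sum_sum_eq_sum_lowerTriangle _ fun i j ↦ by simp only [a]; ring, Finset.mul_sum]
    _ ≤ 4 * ∑ i, (v i - w i) ^ 2 := by
        linarith [sum_sum_sq_mul_sub_mul_le hv hw]
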